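/- Bregman duality gap bound (Theorem 2): let ψ : ℝ^p → ℝ be continuously differentiable and strictly convex with Bregman divergence D_ψ(z,β) = ψ(z) − ψ(β) − ⟨z − β, ∇ψ(β)⟩, let C ⊆ ℝ^p be a nonempty convex set, let β ∈ ℝ^p, and define the primal f(z;β) = D_ψ(z,β) for z ∈ C (and +∞ off C) and the dual function d(u;β) = −ψ*(∇ψ(β) − u) − σ_C(u) + ⟨β, ∇ψ(β)⟩ − ψ(β) for u ∈ ℝ^p, where ψ* is the Fenchel conjugate of ψ and σ_C(u) = sup_{w∈C} ⟨u,w⟩. Suppose ẑ ∈ C is the unique minimizer of z ↦ D_ψ(z,β) over C. Then for every z ∈ C and every u ∈ ℝ^p with ψ*(∇ψ(β) − u) and σ_C(u) finite: (a) d(u;β) ≤ f(z;β) (weak duality), and (b) D_ψ(z,ẑ) ≤ f(z;β) − d(u;β). -/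

import Mathlib

open scoped RealInnerProductSpace

/-!
Weak duality: for `w ∈ C`, adding the defining inequalities
`⟪∇ψ(β) − u, w⟫ − ψ(w) ≤ ψ*(∇ψ(β) − u)` and `⟪u, w⟫ ≤ σ_C(u)` gives `d(u;β) ≤ D_ψ(w,β)`.
For the gap bound, the three-point identity
`D_ψ(z,β) = D_ψ(z,ẑ) + D_ψ(ẑ,β) + ⟪∇ψ(ẑ) − ∇ψ(β), z − ẑ⟫` together with the first-order
optimality of `ẑ` on the convex set `C` (the last term is the derivative of `D_ψ(·,β)` at `ẑ`
in the direction `z − ẑ`, hence nonnegative) yields the Pythagorean inequality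
`D_ψ(z,ẑ) ≤ D_ψ(z,β) − D_ψ(ẑ,β)`, and weak duality at `w = ẑ` finishes.
-/

/-- The Bregman divergence `D_ψ(z, b) = ψ(z) − ψ(b) − ⟪z − b, ∇ψ(b)⟫` generated by a
differentiable function `ψ : ℝ^p → ℝ`. -/
noncomputable def bregmanDiv (p : ℕ) (ψ : EuclideanSpace ℝ (Fin p) → ℝ)
    (z b : EuclideanSpace ℝ (Fin p)) : ℝ :=
  ψ z - ψ b - ⟪z - b, gradient ψ b⟫

theorem IsMinOn.inner_sub_nonneg_of_hasGradientAt {E : Type*} [NormedAddCommGroup E]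
    [InnerProductSpace ℝ E] [CompleteSpace E] {f : E → ℝ} {s : Set E} {a z g : E}
    (hmin : IsMinOn f s a) (hf : HasGradientAt f g a) (hs : Convex ℝ s) (ha : a ∈ s)
    (hz : z ∈ s) : 0 ≤ ⟪g, z - a⟫ := by
  simpa [InnerProductSpace.toDual_apply_apply] using
    hmin.localize.hasFDerivWithinAt_nonneg hf.hasFDerivAt.hasFDerivWithinAt
      (sub_mem_posTangentConeAt_of_segment_subset (hs.segment_subset ha hz))

theorem bregmanDiv_add_bregmanDiv (p : ℕ) (ψ : EuclideanSpace ℝ (Fin p) → ℝ)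
    (z c b : EuclideanSpace ℝ (Fin p)) :
    bregmanDiv p ψ z c + bregmanDiv p ψ c b + ⟪gradient ψ c - gradient ψ b, z - c⟫ =
      bregmanDiv p ψ z b := by
  simp only [bregmanDiv, inner_sub_left, inner_sub_right, real_inner_comm (gradient ψ b),
    real_inner_comm (gradient ψ c)]
  ring

theorem hasGradientAt_bregmanDiv_left {p : ℕ} {ψ : EuclideanSpace ℝ (Fin p) → ℝ}
    {z : EuclideanSpace ℝ (Fin p)} (hψ : DifferentiableAt ℝ ψ z) (b : EuclideanSpace ℝ (Fin p)) :
    HasGradientAt (fun w => bregmanDiv p ψ w b) (gradient ψ z - gradient ψ b) z := by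
  set g := gradient ψ b
  have hlin : HasFDerivAt (fun w => ⟪w - b, g⟫) (InnerProductSpace.toDual ℝ _ g) z := by
    have hfun : (fun w => ⟪w - b, g⟫) =
        fun w => InnerProductSpace.toDual ℝ _ g w - InnerProductSpace.toDual ℝ _ g b := by
      ext w
      simp only [InnerProductSpace.toDual_apply_apply, real_inner_comm g, inner_sub_right]
    rw [hfun]
    exact (InnerProductSpace.toDual ℝ _ g).hasFDerivAt.sub_const _
  rw [hasGradientAt_iff_hasFDerivAt, map_sub]
  exact ((hψ.hasGradientAt.hasFDerivAt).sub_const (ψ b)).sub hlin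

theorem bregmanDiv_add_bregmanDiv_le_of_isMinOn {p : ℕ} {ψ : EuclideanSpace ℝ (Fin p) → ℝ}
    (hψ : Differentiable ℝ ψ) {C : Set (EuclideanSpace ℝ (Fin p))} (hC : Convex ℝ C)
    {b zhat z : EuclideanSpace ℝ (Fin p)} (hzhat : zhat ∈ C)
    (hmin : IsMinOn (fun w => bregmanDiv p ψ w b) C zhat) (hz : z ∈ C) :
    bregmanDiv p ψ z zhat + bregmanDiv p ψ zhat b ≤ bregmanDiv p ψ z b := by
  have hopt := hmin.inner_sub_nonneg_of_hasGradientAt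
    (hasGradientAt_bregmanDiv_left (hψ zhat) b) hC hzhat hz
  linarith [bregmanDiv_add_bregmanDiv p ψ z zhat b]

theorem dual_le_bregmanDiv (p : ℕ) (ψ : EuclideanSpace ℝ (Fin p) → ℝ)
    {C : Set (EuclideanSpace ℝ (Fin p))} {b u w : EuclideanSpace ℝ (Fin p)} {psistar sigmaC : ℝ}
    (hpsistar : psistar ∈ upperBounds (Set.range fun w => ⟪gradient ψ b - u, w⟫ - ψ w))
    (hsigmaC : sigmaC ∈ upperBounds ((fun w => ⟪u, w⟫) '' C)) (hw : w ∈ C) :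
    -psistar - sigmaC + ⟪b, gradient ψ b⟫ - ψ b ≤ bregmanDiv p ψ w b := by
  have hconj : ⟪gradient ψ b - u, w⟫ - ψ w ≤ psistar := hpsistar ⟨w, rfl⟩
  have hsupp : ⟪u, w⟫ ≤ sigmaC := hsigmaC ⟨w, hw, rfl⟩
  rw [inner_sub_left] at hconj
  have hsymm : ⟪w - b, gradient ψ b⟫ = ⟪gradient ψ b, w⟫ - ⟪b, gradient ψ b⟫ := by
    rw [inner_sub_left, real_inner_comm]
  rw [bregmanDiv, hsymm]
  linarith

theorem bregman_gap_bound_general (p : ℕ)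
    (ψ : EuclideanSpace ℝ (Fin p) → ℝ)
    (hψdiff : ContDiff ℝ 1 ψ)
    (C : Set (EuclideanSpace ℝ (Fin p))) (hCconv : Convex ℝ C)
    (β : EuclideanSpace ℝ (Fin p))
    (zhat : EuclideanSpace ℝ (Fin p)) (hzhatC : zhat ∈ C)
    (hmin : ∀ z ∈ C, bregmanDiv p ψ zhat β ≤ bregmanDiv p ψ z β)
    (u : EuclideanSpace ℝ (Fin p))
    (psistar : ℝ)
    (hpsistar : IsLUB (Set.range fun w => ⟪gradient ψ β - u, w⟫ - ψ w) psistar)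
    (sigmaC : ℝ)
    (hsigmaC : IsLUB ((fun w => ⟪u, w⟫) '' C) sigmaC) :
    ∀ z ∈ C,
      (-psistar - sigmaC + ⟪β, gradient ψ β⟫ - ψ β ≤ bregmanDiv p ψ z β) ∧
      bregmanDiv p ψ z zhat ≤
        bregmanDiv p ψ z β - (-psistar - sigmaC + ⟪β, gradient ψ β⟫ - ψ β) := by
  intro z hz
  have hdual : ∀ w ∈ C, -psistar - sigmaC + ⟪β, gradient ψ β⟫ - ψ β ≤ bregmanDiv p ψ w β :=
    fun _ hw => dual_le_bregmanDiv p ψ hpsistar.1 hsigmaC.1 hw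
  have hpyth := bregmanDiv_add_bregmanDiv_le_of_isMinOn (hψdiff.differentiable one_ne_zero)
    hCconv hzhatC hmin hz
  exact ⟨hdual z hz, by linarith [hdual zhat hzhatC]⟩

/-- **Bregman duality gap bound (Theorem 2).**
Let `ψ : ℝ^p → ℝ` be continuously differentiable and strictly convex, with Bregman
divergence `D_ψ(z,β) = ψ(z) − ψ(β) − ⟪z − β, ∇ψ(β)⟫`, let `C ⊆ ℝ^p` be a nonempty convex
set, and let `β ∈ ℝ^p`.  The primal loss is `f(z;β) = D_ψ(z,β)` for `z ∈ C`, and the dual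
function is `d(u;β) = −ψ*(∇ψ(β) − u) − σ_C(u) + ⟪β, ∇ψ(β)⟫ − ψ(β)`, where the finiteness of
the Fenchel conjugate value `ψ*(∇ψ(β) − u) = sup_w (⟪∇ψ(β) − u, w⟫ − ψ(w))` and of the
support function value `σ_C(u) = sup_{w∈C} ⟪u,w⟫` is encoded by the existence of real least
upper bounds `psistar` and `sigmaC`.  Suppose `ẑ ∈ C` is the (unique) minimizer of
`z ↦ D_ψ(z,β)` over `C`.  Then for every `z ∈ C`:
(a) weak duality `d(u;β) ≤ f(z;β)`, and
(b) `D_ψ(z,ẑ) ≤ f(z;β) − d(u;β)`. -/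
theorem bregman_gap_bound (p : ℕ)
    (ψ : EuclideanSpace ℝ (Fin p) → ℝ)
    (hψdiff : ContDiff ℝ 1 ψ)
    (hψstrict : StrictConvexOn ℝ Set.univ ψ)
    (C : Set (EuclideanSpace ℝ (Fin p))) (hCne : C.Nonempty) (hCconv : Convex ℝ C)
    (β : EuclideanSpace ℝ (Fin p))
    (zhat : EuclideanSpace ℝ (Fin p)) (hzhatC : zhat ∈ C)
    (hmin : ∀ z ∈ C, bregmanDiv p ψ zhat β ≤ bregmanDiv p ψ z β)
    (huniq : ∀ z ∈ C, bregmanDiv p ψ z β ≤ bregmanDiv p ψ zhat β → z = zhat)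
    (u : EuclideanSpace ℝ (Fin p))
    (psistar : ℝ)
    (hpsistar : IsLUB (Set.range fun w => ⟪gradient ψ β - u, w⟫ - ψ w) psistar)
    (sigmaC : ℝ)
    (hsigmaC : IsLUB ((fun w => ⟪u, w⟫) '' C) sigmaC) :
    ∀ z ∈ C,
      (-psistar - sigmaC + ⟪β, gradient ψ β⟫ - ψ β ≤ bregmanDiv p ψ z β) ∧
      bregmanDiv p ψ z zhat ≤
        bregmanDiv p ψ z β - (-psistar - sigmaC + ⟪β, gradient ψ β⟫ - ψ β) :=
  bregman_gap_bound_general p ψ hψdiff C hCconv β zhat hzhatC hmin u psistar hpsistar sigmaC hsigmaC
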